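/- Let f : ℝ → ℝ be continuous with f(s) > 0 for all s ∈ [0,T], where T > 0. Let M be the running maximum of f on [0,T], extended constantly outside [0,T], with Lebesgue–Stieltjes measure μ_M (note M(s) > 0 on [0,T]). Then for every t ∈ [0,T]: ∫_{(0,t]} ( f(s) / M(s) ) dμ_M(s) = M(t) − M(0). -/

import Mathlib

/-!
The measure `dM` does not charge any open interval on which `M` is constant, so it lives on the
points near which `M` is not locally constant. At such a point `s ∈ [0, T]` the maximum of `f`
over `[0, s]` is attained at `s` itself: otherwise `f(s) < M(s)`, and by continuity `f` stays
below `M(s)` a little to the right of `s`, while `M` already equals `M(s)` a little to the left.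
Hence `f = M` holds `dM`-a.e. on `[0, T]`, the integrand is `dM`-a.e. equal to `1` on `(0, t]`,
and the integral is `dM((0, t]) = M(t) - M(0)`.
-/

open MeasureTheory

/-- The running maximum of `f` on `[0, T]`, extended constantly outside `[0, T]`. -/
noncomputable def runMax (f : ℝ → ℝ) (T t : ℝ) : ℝ :=
  sSup (f '' Set.Icc (0:ℝ) (max 0 (min t T)))

open Set Filter Topology

theorem ae_not_eventually_eq_of_measure_Ioc {μ : Measure ℝ} {g : ℝ → ℝ}
    (hμ : ∀ a b : ℝ, a ≤ b → μ (Ioc a b) = ENNReal.ofReal (g b - g a)) :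
    ∀ᵐ x ∂μ, ¬ ∀ᶠ y in 𝓝 x, g y = g x := by
  rw [ae_iff]
  simp only [not_not]
  refine measure_null_of_locally_null _ fun x hx => ?_
  obtain ⟨a, b, -, hab_nhds, hab_const⟩ := exists_Icc_mem_subset_of_mem_nhds hx
  have hxab : x ∈ Ioo a b := Icc_mem_nhds_iff.1 hab_nhds
  have hab : a ≤ b := (hxab.1.trans hxab.2).le
  refine ⟨Ioc a b, mem_nhdsWithin_of_mem_nhds (Ioc_mem_nhds hxab.1 hxab.2), ?_⟩
  rw [hμ a b hab, hab_const (right_mem_Icc.2 hab), hab_const (left_mem_Icc.2 hab), sub_self,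
    ENNReal.ofReal_zero]

section RunMax

variable {f : ℝ → ℝ} {T : ℝ}

theorem bddAbove_image_runMax (hf : Continuous f) (t : ℝ) :
    BddAbove (f '' Icc (0:ℝ) (max 0 (min t T))) :=
  (isCompact_Icc.image hf).bddAbove

theorem runMax_le {t c : ℝ} (h : ∀ w ∈ Icc (0:ℝ) (max 0 (min t T)), f w ≤ c) :
    runMax f T t ≤ c :=
  csSup_le ((nonempty_Icc.2 (le_max_left _ _)).image f) (forall_mem_image.2 h)

theorem le_runMax (hf : Continuous f) {u t : ℝ} (hu : u ∈ Icc (0:ℝ) T) (hut : u ≤ t) :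
    f u ≤ runMax f T t :=
  le_csSup (bddAbove_image_runMax hf t)
    ⟨u, ⟨hu.1, le_max_of_le_right (le_min hut hu.2)⟩, rfl⟩

theorem runMax_mono (hf : Continuous f) : Monotone (runMax f T) := fun _ b hab =>
  csSup_le_csSup (bddAbove_image_runMax hf b) ((nonempty_Icc.2 (le_max_left _ _)).image f)
    (image_mono (Icc_subset_Icc le_rfl (max_le_max le_rfl (min_le_min hab le_rfl))))

theorem exists_eq_runMax (hf : Continuous f) {s : ℝ} (hs : s ∈ Icc (0:ℝ) T) :
    ∃ u ∈ Icc (0:ℝ) s, f u = runMax f T s := by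
  obtain ⟨u, hu, hmax⟩ := isCompact_Icc.exists_isMaxOn (nonempty_Icc.2 hs.1) hf.continuousOn
  refine ⟨u, hu, le_antisymm (le_runMax hf ⟨hu.1, hu.2.trans hs.2⟩ hu.2) (runMax_le ?_)⟩
  rw [min_eq_left hs.2, max_eq_right hs.1]
  exact fun w hw => hmax hw

theorem runMax_eventually_eq_of_lt (hf : Continuous f) {s : ℝ} (hs : s ∈ Icc (0:ℝ) T)
    (hlt : f s < runMax f T s) : ∀ᶠ y in 𝓝 s, runMax f T y = runMax f T s := by
  obtain ⟨u, hu, hfu⟩ := exists_eq_runMax hf hs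
  have hus : u < s := hu.2.lt_of_ne (by rintro rfl; exact hlt.ne hfu)
  obtain ⟨ε, hε, hball⟩ :=
    Metric.eventually_nhds_iff.1 (hf.continuousAt.eventually_lt continuousAt_const hlt)
  filter_upwards [Ioo_mem_nhds hus (lt_add_of_pos_right s hε)] with y hy
  refine le_antisymm (runMax_le fun w hw => ?_)
    (hfu ▸ le_runMax hf ⟨hu.1, hu.2.trans hs.2⟩ hy.1.le)
  rcases le_or_gt w s with hws | hsw
  · exact le_runMax hf ⟨hw.1, hws.trans hs.2⟩ hws
  · have hwy : w ≤ y := hw.2.trans (max_le (hu.1.trans hy.1.le) (min_le_left _ _))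
    refine (hball ?_).le
    rw [Real.dist_eq, abs_of_pos (sub_pos.2 hsw)]
    linarith [hy.2]

theorem ae_eq_runMax (hf : Continuous f) {μ : Measure ℝ}
    (hμ : ∀ a b : ℝ, a ≤ b → μ (Ioc a b) = ENNReal.ofReal (runMax f T b - runMax f T a)) :
    ∀ᵐ s ∂μ, s ∈ Icc (0:ℝ) T → f s = runMax f T s := by
  filter_upwards [ae_not_eventually_eq_of_measure_Ioc hμ] with s hs hsT
  exact (le_runMax hf hsT le_rfl).eq_or_lt.resolve_right
    fun hlt => hs (runMax_eventually_eq_of_lt hf hsT hlt)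

end RunMax

theorem integral_ratio_wrt_runMax_general
    (f : ℝ → ℝ) (hf : Continuous f) (T : ℝ)
    (hfpos : ∀ s ∈ Set.Icc (0:ℝ) T, 0 < f s)
    (μM : Measure ℝ)
    (hμM : ∀ a b : ℝ, a ≤ b →
      μM (Set.Ioc a b) = ENNReal.ofReal (runMax f T b - runMax f T a)) :
    ∀ t ∈ Set.Icc (0:ℝ) T,
      ∫ s in Set.Ioc (0:ℝ) t, f s / runMax f T s ∂μM
        = runMax f T t - runMax f T 0 := by
  intro t ht
  have hratio : ∀ᵐ s ∂μM.restrict (Ioc 0 t), f s / runMax f T s = 1 := by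
    filter_upwards [ae_restrict_of_ae (ae_eq_runMax hf hμM), ae_restrict_mem measurableSet_Ioc]
      with s heq hs
    have hsT : s ∈ Icc (0:ℝ) T := ⟨hs.1.le, hs.2.trans ht.2⟩
    rw [← heq hsT, div_self (hfpos s hsT).ne']
  rw [integral_congr_ae hratio, integral_const, measureReal_restrict_apply_univ, measureReal_def,
    hμM 0 t ht.1, ENNReal.toReal_ofReal (sub_nonneg.2 (runMax_mono hf ht.1)), smul_eq_mul,
    mul_one]

/-- For a continuous positive `f` with running maximum `M`,
`∫_{(0,t]} (f(s)/M(s)) dM(s) = M(t) − M(0)` (Gamma functional of Example 6.2). -/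
theorem integral_ratio_wrt_runMax
    (f : ℝ → ℝ) (hf : Continuous f) (T : ℝ) (hT : 0 < T)
    (hfpos : ∀ s ∈ Set.Icc (0:ℝ) T, 0 < f s)
    (μM : Measure ℝ)
    (hμM : ∀ a b : ℝ, a ≤ b →
      μM (Set.Ioc a b) = ENNReal.ofReal (runMax f T b - runMax f T a)) :
    ∀ t ∈ Set.Icc (0:ℝ) T,
      ∫ s in Set.Ioc (0:ℝ) t, f s / runMax f T s ∂μM
        = runMax f T t - runMax f T 0 :=
  integral_ratio_wrt_runMax_general f hf T hfpos μM hμM
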